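/- For every s > 0, the open ball W_s is contained in U. Moreover, for every t ∈ [0, 1] the point (√(s/(1+s))·cos(2πt), √(s/(1+s))·sin(2πt), s) lies on the boundary sphere of W_s, i.e. its Euclidean distance to the center (0, 0, s + ½·(1+s)⁻²) equals r(s). (Thus W_s touches the surface of revolution Σ = ∂U from the inside along the circle at height s, so the inscribed radius of Σ at each point of that circle is at least r(s).) -/

import Mathlib

open Real Set

noncomputable section

/-- The open region `U` enclosed by the model surface of revolution `Σ`:
`U = {x ∈ ℝ³ : x₃ > 0, x₁² + x₂² < x₃/(1+x₃)}`. -/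
def regionU : Set (ℝ × ℝ × ℝ) :=
  {x | 0 < x.2.2 ∧ x.1 ^ 2 + x.2.1 ^ 2 < x.2.2 / (1 + x.2.2)}

/-- The radius `r(s) = ½·(1 + 4s(1+s)³)^{1/2}·(1+s)⁻²`. -/
def rad (s : ℝ) : ℝ := (1 / 2) * Real.sqrt (1 + 4 * s * (1 + s) ^ 3) / (1 + s) ^ 2

/-- The center `(0, 0, s + ½·(1+s)⁻²)` of the ball `W_s`. -/
def ctr (s : ℝ) : ℝ × ℝ × ℝ := (0, 0, s + (1 / 2) / (1 + s) ^ 2)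

/-- The open Euclidean ball `W_s` of radius `r(s)` centered at `(0, 0, s + ½(1+s)⁻²)`. -/
def ballW (s : ℝ) : Set (ℝ × ℝ × ℝ) :=
  {x | (x.1 - (ctr s).1) ^ 2 + (x.2.1 - (ctr s).2.1) ^ 2 + (x.2.2 - (ctr s).2.2) ^ 2
        < (rad s) ^ 2}

/-! Inside `W_s` the squared horizontal radius at height `u` is `r(s)² - (u - c)²`, where `c` is
the height of the centre, and it falls short of the profile value `u/(1+u)` of `U` by
`(u - s)² (u(1+s)² + s² + 2s) / ((1+u)(1+s)²) ≥ 0`. The double zero at `u = s` is the tangency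
along the circle at height `s`, where `r(s)² = s/(1+s) + (s - c)²`. Only heights `u > 0` occur
because `c² - r(s)² = s³(s+2)/(1+s)² > 0`. -/

section

variable {s : ℝ}

lemma rad_nonneg (s : ℝ) : 0 ≤ rad s := by
  unfold rad
  positivity

lemma rad_sq (hs : 0 ≤ s) : rad s ^ 2 = (1 + 4 * s * (1 + s) ^ 3) / (4 * (1 + s) ^ 4) := by
  have h : 0 ≤ 1 + 4 * s * (1 + s) ^ 3 := by positivity
  unfold rad
  rw [div_pow, mul_pow, sq_sqrt h]
  field_simp
  ring

lemma rad_sq_eq_div_add_sq (hs : 0 ≤ s) :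
    rad s ^ 2 = s / (1 + s) + (s - (ctr s).2.2) ^ 2 := by
  rw [rad_sq hs, ctr]
  field_simp
  ring

lemma ctr_sq_sub_rad_sq (hs : 0 ≤ s) :
    (ctr s).2.2 ^ 2 - rad s ^ 2 = s ^ 3 * (s + 2) / (1 + s) ^ 2 := by
  rw [rad_sq hs, ctr]
  field_simp
  ring

lemma rad_sq_lt_ctr_sq (hs : 0 < s) : rad s ^ 2 < (ctr s).2.2 ^ 2 := by
  have h := ctr_sq_sub_rad_sq hs.le
  have : 0 < s ^ 3 * (s + 2) / (1 + s) ^ 2 := by positivity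
  linarith

lemma rad_sq_sub_sq_le_div (hs : 0 ≤ s) {u : ℝ} (hu : 0 < u) :
    rad s ^ 2 - (u - (ctr s).2.2) ^ 2 ≤ u / (1 + u) := by
  have gap : u / (1 + u) - (rad s ^ 2 - (u - (ctr s).2.2) ^ 2)
      = (u - s) ^ 2 * (u * (1 + s) ^ 2 + s ^ 2 + 2 * s) / ((1 + u) * (1 + s) ^ 2) := by
    rw [rad_sq hs, ctr]
    field_simp
    ring
  have : 0 ≤ (u - s) ^ 2 * (u * (1 + s) ^ 2 + s ^ 2 + 2 * s) / ((1 + u) * (1 + s) ^ 2) := by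
    positivity
  linarith

lemma mem_ballW_iff {x : ℝ × ℝ × ℝ} :
    x ∈ ballW s ↔ x.1 ^ 2 + x.2.1 ^ 2 + (x.2.2 - (ctr s).2.2) ^ 2 < rad s ^ 2 := by
  simp [ballW, ctr]

lemma pos_of_mem_ballW (hs : 0 < s) {x : ℝ × ℝ × ℝ} (hx : x ∈ ballW s) : 0 < x.2.2 := by
  rw [mem_ballW_iff] at hx
  have hc : 0 < (ctr s).2.2 := by
    simp only [ctr]
    positivity
  by_contra! hu
  nlinarith [rad_sq_lt_ctr_sq hs, sq_nonneg x.1, sq_nonneg x.2.1]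

theorem ballW_subset_regionU (hs : 0 < s) : ballW s ⊆ regionU := by
  intro x hx
  have hu := pos_of_mem_ballW hs hx
  rw [mem_ballW_iff] at hx
  exact ⟨hu, by linarith [rad_sq_sub_sq_le_div hs.le hu]⟩

theorem dist_circle_ctr_eq_rad (hs : 0 ≤ s) (θ : ℝ) :
    √((√(s / (1 + s)) * cos θ - (ctr s).1) ^ 2 + (√(s / (1 + s)) * sin θ - (ctr s).2.1) ^ 2
      + (s - (ctr s).2.2) ^ 2) = rad s := by
  have hcircle : (√(s / (1 + s)) * cos θ) ^ 2 + (√(s / (1 + s)) * sin θ) ^ 2 = s / (1 + s) := by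
    rw [mul_pow, mul_pow, ← mul_add, cos_sq_add_sin_sq, mul_one, sq_sqrt (by positivity)]
  rw [← sqrt_sq (rad_nonneg s), rad_sq_eq_div_add_sq hs]
  simp only [ctr, sub_zero]
  rw [hcircle]

end

theorem stmt6 :
    ∀ s > (0 : ℝ), ballW s ⊆ regionU ∧
      ∀ t ∈ Set.Icc (0 : ℝ) 1,
        Real.sqrt ((Real.sqrt (s / (1 + s)) * Real.cos (2 * π * t) - (ctr s).1) ^ 2
          + (Real.sqrt (s / (1 + s)) * Real.sin (2 * π * t) - (ctr s).2.1) ^ 2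
          + (s - (ctr s).2.2) ^ 2) = rad s :=
  fun _ hs => ⟨ballW_subset_regionU hs, fun t _ => dist_circle_ctr_eq_rad hs.le (2 * π * t)⟩

end
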